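/- arXiv:1402.6819 — 3 statements merged into one kernel-verified Lean document; each statement's English description precedes it below -/
import Mathlib

section
/- Under Hypothesis A, for every i ∈ {1,…,N−1}: lim_{t↑1} (1 − K_{1i}(t)) / (1−t)^{1/2^i} = D_i. That is, the generating function of the total number of type-(i+1) emigrants ever produced by the subprocess of types 1,…,i satisfies 1 − K_{1i}(t) ∼ D_i (1−t)^{1/2^i} as t ↑ 1. -/
open Filter Topology

noncomputable section

namespace BD

/-- The `j`-th coordinate (natural index) of a multi-index, `0` out of range. -/
def coord {N : ℕ} (k : Fin N → ℕ) (j : ℕ) : ℕ := if h : j < N then k ⟨j, h⟩ else 0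

/-- Offspring probability generating function of (0-based) type `i`:
`h_i(s) = E ∏_j s_j ^ η_{ij}`. -/
def pgf (N : ℕ) (η : ℕ → (Fin N → ℕ) → ℝ) (i : ℕ) (s : Fin N → ℝ) : ℝ :=
  ∑' k : Fin N → ℕ, η i k * ∏ j : Fin N, s j ^ k j

/-- Iterated generating functions: `Hgen N η n s i = H_n^{(i)}(s)`. -/
def Hgen (N : ℕ) (η : ℕ → (Fin N → ℕ) → ℝ) : ℕ → (Fin N → ℝ) → Fin N → ℝ
  | 0, s => s
  | n + 1, s => fun i => pgf N η i.1 (Hgen N η n s)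

/-- `Q_n^{(i)}(s) = 1 - H_n^{(i)}(s)`. -/
def Qfun (N : ℕ) (η : ℕ → (Fin N → ℕ) → ℝ) (n : ℕ) (s : Fin N → ℝ) (i : Fin N) : ℝ :=
  1 - Hgen N η n s i

/-- `Q_n^{(i)} = Q_n^{(i)}(0)`, the survival probability at time `n` started
from one particle of type `i`. -/
def Qsurv (N : ℕ) (η : ℕ → (Fin N → ℕ) → ℝ) (n : ℕ) (i : Fin N) : ℝ :=
  Qfun N η n (fun _ => 0) i

/-- Mean number of type-`j` children of a type-`i` particle. -/
def meanM (N : ℕ) (η : ℕ → (Fin N → ℕ) → ℝ) (i j : ℕ) : ℝ :=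
  ∑' k : Fin N → ℕ, η i k * (coord k j : ℝ)

/-- `b_i = Var(η_{ii}) / 2` (the mean of `η_{ii}` being `1`). -/
def bCoef (N : ℕ) (η : ℕ → (Fin N → ℕ) → ℝ) (i : ℕ) : ℝ :=
  (∑' k : Fin N → ℕ, η i k * ((coord k i : ℝ) - 1) ^ 2) / 2

/-- `m_{i,i+1}` (0-based). -/
def mCoef (N : ℕ) (η : ℕ → (Fin N → ℕ) → ℝ) (i : ℕ) : ℝ := meanM N η i (i + 1)

/-- Hypothesis A for the strongly critical decomposable process, types 0-based:
`η i` is the offspring distribution of type `i`, `0 ≤ i < N`. -/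
structure HypA (N : ℕ) (η : ℕ → (Fin N → ℕ) → ℝ) : Prop where
  nonneg : ∀ i, i < N → ∀ k, 0 ≤ η i k
  total : ∀ i, i < N → HasSum (η i) 1
  decomp : ∀ i, i < N → ∀ k, η i k ≠ 0 → ∀ j : Fin N, (j : ℕ) < i → k j = 0
  critical : ∀ i, i < N → HasSum (fun k : Fin N → ℕ => η i k * (coord k i : ℝ)) 1
  firstMom : ∀ i, i < N → ∀ j : ℕ,
    Summable (fun k : Fin N → ℕ => η i k * (coord k j : ℝ))
  secondMom : ∀ i, i < N → ∀ j l : ℕ,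
    Summable (fun k : Fin N → ℕ => η i k * ((coord k j : ℝ) * (coord k l : ℝ)))
  bPos : ∀ i, i < N → 0 < bCoef N η i
  mPos : ∀ i, i + 1 < N → 0 < mCoef N η i

/-- `γ` for the 0-based type `t`; equals the paper's `γ_i = 2^{-(N-i)}` for `i = t+1`. -/
def gam (N t : ℕ) : ℝ := (1 / 2 : ℝ) ^ (N - 1 - t)

/-- `γ` with the paper's 1-based indexing and `γ_0 = 0`. -/
def gamP (N i : ℕ) : ℝ := if i = 0 then 0 else (1 / 2 : ℝ) ^ (N - i)

/-- `c_{j,i}` built from abstract coefficients: `cAux b m t r = c_{t-r,t}` (0-based),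
`c_{tt} = 1/b_t`, `c_{st} = sqrt(m_s c_{s+1,t} / b_s)`. -/
def cAux (b m : ℕ → ℝ) (t : ℕ) : ℕ → ℝ
  | 0 => 1 / b t
  | r + 1 => Real.sqrt (m (t - (r + 1)) * cAux b m t r / b (t - (r + 1)))

/-- `d_{j,i}` built from abstract coefficients: `dAux b m t r = d_{t-r,t}` (0-based),
`d_{tt} = sqrt(m_t / b_t)`, `d_{st} = sqrt(m_s d_{s+1,t} / b_s)`. -/
def dAux (b m : ℕ → ℝ) (t : ℕ) : ℕ → ℝ
  | 0 => Real.sqrt (m t / b t)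
  | r + 1 => Real.sqrt (m (t - (r + 1)) * dAux b m t r / b (t - (r + 1)))

/-- Closed form of `c_{iN}` of the paper, with 0-based `t = i - 1`. -/
def cConst (N : ℕ) (η : ℕ → (Fin N → ℕ) → ℝ) (t : ℕ) : ℝ :=
  (1 / bCoef N η (N - 1)) ^ ((1 / 2 : ℝ) ^ (N - 1 - t)) *
    ∏ u ∈ Finset.Ico t (N - 1),
      (mCoef N η u / bCoef N η u) ^ ((1 / 2 : ℝ) ^ (u - t + 1))

/-- `D_i` of the paper, with 0-based `t = i - 1`. -/
def DConst (N : ℕ) (η : ℕ → (Fin N → ℕ) → ℝ) (t : ℕ) : ℝ :=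
  dAux (bCoef N η) (mCoef N η) t t

/-- The vector `s'` with `s'_j = 1 - (1 - s_j) Q_{n-m}^{(j)}`. -/
def sPrime (N : ℕ) (η : ℕ → (Fin N → ℕ) → ℝ) (m n : ℕ) (s : Fin N → ℝ) : Fin N → ℝ :=
  fun j => 1 - (1 - s j) * Qsurv N η (n - m) j

/-- Conditional generating function of the reduced process:
`J_{m,n}^{(i)}(s) = 1 - Q_m^{(i)}(s') / Q_n^{(i)}`. -/
def Jred (N : ℕ) (η : ℕ → (Fin N → ℕ) → ℝ) (m n : ℕ) (s : Fin N → ℝ) (i : Fin N) : ℝ :=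
  1 - Qfun N η m (sPrime N η m n s) i / Qsurv N η n i

/-- Joint conditional generating function of the reduced process along
a list of (absolute) observation times with marks, relative to the previous
time `prev`; the paper's `Ĵ` is `Jhat N η n 0 [(m₁,S₁),…,(m_p,S_p)]` at coordinate `0`. -/
def Jhat (N : ℕ) (η : ℕ → (Fin N → ℕ) → ℝ) (n : ℕ) : ℕ → List (ℕ × (Fin N → ℝ)) → Fin N → ℝ
  | _, [] => fun _ => 1
  | prev, (m, S) :: rest =>
      Jred N η (m - prev) (n - prev) (fun j => S j * Jhat N η n m rest j)

/-- `φ_i(y; u, v)` of the paper, with `a = b_i c_{iN}`. -/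
def phiLim (a y u v : ℝ) : ℝ :=
  if v = 1 then (1 - u) / (a * y * (1 - u) + 1)
  else
    Real.sqrt (1 - v) *
        ((1 - u) + Real.sqrt (1 - v) * Real.tanh (a * y * Real.sqrt (1 - v))) /
      ((1 - u) * Real.tanh (a * y * Real.sqrt (1 - v)) + Real.sqrt (1 - v))

/-- `Ψ_i(y; λ, μ)` with `b = b_i`, `m = m_{i,i+1}`. -/
def PsiLim (b m y lam mu : ℝ) : ℝ :=
  Real.sqrt (m * mu / b) *
      (b * lam + Real.sqrt (b * m * mu) * Real.tanh (y * Real.sqrt (b * m * mu))) /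
    (b * lam * Real.tanh (y * Real.sqrt (b * m * mu)) + Real.sqrt (b * m * mu))

/-- `ψ(x; s) = (1-s)/(x(1-s) + 1 - x)`. -/
def psiLim (x s : ℝ) : ℝ := (1 - s) / (x * (1 - s) + 1 - x)

/-- Product of the third components of a list of triples. -/
def vprod : List (ℝ × ℝ × ℝ) → ℝ
  | [] => 1
  | (_, _, v) :: rest => v * vprod rest

/-- The iterated `X_i^{(p)}` along a list of `(y, u, v)` triples; `a = b_i c_{iN}`:
`X^{(p)}((y,u,v)::rest) = X(y; u ⬝ X^{(p-1)}(rest), v ⬝ ∏ v')` where `X = 1 - φ`. -/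
def Xiter (a : ℝ) : List (ℝ × ℝ × ℝ) → ℝ
  | [] => 1
  | (y, u, v) :: rest => 1 - phiLim a y (u * Xiter a rest) (v * vprod rest)

/-- `G(x; s) = 1 - ψ(x; s)`. -/
def Gfun (x s : ℝ) : ℝ := 1 - psiLim x s

/-- Iterated `G^{(p)}` along a list of `(x, s)` pairs, with the rescaling
`x ↦ x/(1-x₁)` of the later increments. -/
def Giter : List (ℝ × ℝ) → ℝ
  | [] => 1
  | (x, s) :: rest => Gfun x (s * Giter (rest.map fun q => (q.1 / (1 - x), q.2)))
termination_by l => l.length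
decreasing_by simp [List.length_map]

/-- `s_k(n) = exp(-λ_k n^{-γ_k})`. -/
def sVec (N : ℕ) (lam : Fin N → ℝ) (n : ℕ) : Fin N → ℝ :=
  fun k => Real.exp (-(lam k) * (n : ℝ) ^ (-(gam N k.1)))


/-- `Kfix N η τ t r = K_{τ-r,τ}(t)` (0-based): the minimal fixed point in `[0,1]` of
`K = h_{τ-r}(v)` with `v_{τ-r} = K`, `v_q = K_{q,τ}(t)` for `τ-r < q ≤ τ`,
`v_{τ+1} = t`, and `v_j = 1` otherwise. -/
def Kfix (N : ℕ) (η : ℕ → (Fin N → ℕ) → ℝ) (τ : ℕ) (t : ℝ) : ℕ → ℝ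
  | r =>
    sInf {K : ℝ | K ∈ Set.Icc (0 : ℝ) 1 ∧
      K = pgf N η (τ - r)
        (fun j : Fin N =>
          if (j : ℕ) = τ - r then K
          else if h : τ - r < (j : ℕ) ∧ (j : ℕ) ≤ τ then Kfix N η τ t (τ - (j : ℕ))
          else if (j : ℕ) = τ + 1 then t else 1)}
termination_by r => r
decreasing_by omega

/-!
Write `K_q` for `K_{q,τ}(t)` when `q ≤ τ`, and put `K_{τ+1} = t`. At level `q`, `K_q` is the
least fixed point of `K ↦ h_q(v)`, where `v` carries `K` at `q`, the higher levels `K_j` at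
`q < j ≤ τ + 1` and `1` elsewhere. Since type `q` is critical, a second-order expansion of `h_q`
turns the fixed point equation into `(1 - K_q)² ρ(K_q) = B`, with `ρ(1) = b_q` and
`B ∼ m_{q,q+1} (1 - K_{q+1})`: by downward induction every `1 - K_j` with `j > q + 1` is of
smaller order than `1 - K_{q+1}`. Hence `(1 - K_q)² ∼ (m_{q,q+1} / b_q) (1 - K_{q+1})`, so the
exponent of `1 - t` halves at each level and the constants follow the recursion defining `d_{q,τ}`.
-/

def taylorRem (n : ℕ) (K : ℝ) : ℝ := ∑ j ∈ Finset.range n, ∑ l ∈ Finset.range j, K ^ l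

lemma pow_eq_taylorRem (n : ℕ) (K : ℝ) :
    K ^ n = 1 - n * (1 - K) + (1 - K) ^ 2 * taylorRem n K := by
  induction n with
  | zero => simp [taylorRem]
  | succ n ih =>
    rw [taylorRem, Finset.sum_range_succ, ← taylorRem, pow_succ]
    push_cast
    linear_combination ih + (1 - K) * geom_sum_mul K n

lemma taylorRem_nonneg (n : ℕ) {K : ℝ} (hK : 0 ≤ K) : 0 ≤ taylorRem n K := by
  unfold taylorRem; positivity

lemma taylorRem_le_taylorRem_one (n : ℕ) {K : ℝ} (hK : K ∈ Set.Icc (0 : ℝ) 1) :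
    taylorRem n K ≤ taylorRem n 1 := by
  unfold taylorRem
  gcongr
  exacts [hK.1, hK.2]

lemma taylorRem_one (n : ℕ) : taylorRem n 1 = n * (n - 1) / 2 := by
  induction n with
  | zero => simp [taylorRem]
  | succ n ih =>
    rw [taylorRem, Finset.sum_range_succ, ← taylorRem, ih]
    simp only [one_pow, Finset.sum_const, Finset.card_range, nsmul_eq_mul, mul_one]
    push_cast
    ring

lemma taylorRem_le_mul_self (n : ℕ) {K : ℝ} (hK : K ∈ Set.Icc (0 : ℝ) 1) :
    taylorRem n K ≤ n * n := by
  have := taylorRem_le_taylorRem_one n hK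
  rw [taylorRem_one] at this
  nlinarith [(Nat.cast_nonneg n : (0 : ℝ) ≤ n)]

lemma one_le_taylorRem {n : ℕ} (hn : 2 ≤ n) {K : ℝ} (hK : 0 ≤ K) : 1 ≤ taylorRem n K := by
  have h := Finset.single_le_sum (f := fun j => ∑ l ∈ Finset.range j, K ^ l)
    (fun j _ => by positivity) (Finset.mem_range.2 (by omega : 1 < n))
  simpa [taylorRem] using h

lemma taylorRem_one_of_le_one {n : ℕ} (hn : n ≤ 1) : taylorRem n 1 = 0 := by
  interval_cases n <;> simp [taylorRem]

lemma continuous_taylorRem (n : ℕ) : Continuous (taylorRem n) := by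
  unfold taylorRem; fun_prop

lemma exp_neg_le_one_sub_add_sq_div_two {T : ℝ} (hT : 0 ≤ T) :
    Real.exp (-T) ≤ 1 - T + T ^ 2 / 2 := by
  have hpos : 0 < 1 + T + T ^ 2 / 2 := by positivity
  rw [Real.exp_neg]
  calc (Real.exp T)⁻¹ ≤ (1 + T + T ^ 2 / 2)⁻¹ :=
        inv_anti₀ hpos (Real.quadratic_le_exp_of_nonneg hT)
    _ ≤ 1 - T + T ^ 2 / 2 := (inv_le_iff_one_le_mul₀' hpos).2 (by nlinarith [sq_nonneg (T ^ 2)])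

section Monomial

variable {N : ℕ}

def prodPow (v : Fin N → ℝ) (k : Fin N → ℕ) : ℝ := ∏ j, v j ^ k j

def linForm (c : Fin N → ℝ) (k : Fin N → ℕ) : ℝ := ∑ j, c j * k j

variable {v : Fin N → ℝ} (hv : ∀ j, v j ∈ Set.Icc (0 : ℝ) 1) (k : Fin N → ℕ)
include hv

lemma prodPow_mem_Icc : prodPow v k ∈ Set.Icc (0 : ℝ) 1 :=
  ⟨Finset.prod_nonneg fun j _ => pow_nonneg (hv j).1 _,
    Finset.prod_le_one (fun j _ => pow_nonneg (hv j).1 _) fun j _ => pow_le_one₀ (hv j).1 (hv j).2⟩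

lemma one_sub_prodPow_le_linForm : 1 - prodPow v k ≤ linForm (fun j => 1 - v j) k := by
  classical
  unfold prodPow linForm
  induction (Finset.univ : Finset (Fin N)) using Finset.induction_on with
  | empty => simp
  | insert j s hj ih =>
    rw [Finset.prod_insert hj, Finset.sum_insert hj]
    have hbern : 1 - v j ^ k j ≤ (1 - v j) * k j := by
      have := one_add_mul_le_pow (by linarith [(hv j).1] : (-2 : ℝ) ≤ v j - 1) (k j)
      simp only [add_sub_cancel] at this
      linarith
    have hs0 : 0 ≤ ∏ x ∈ s, v x ^ k x := Finset.prod_nonneg fun x _ => pow_nonneg (hv x).1 _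
    have hs1 : ∏ x ∈ s, v x ^ k x ≤ 1 :=
      Finset.prod_le_one (fun x _ => pow_nonneg (hv x).1 _) fun x _ => pow_le_one₀ (hv x).1 (hv x).2
    nlinarith [pow_nonneg (hv j).1 (k j), pow_le_one₀ (n := k j) (hv j).1 (hv j).2]

lemma linForm_sub_sq_le_one_sub_prodPow :
    linForm (fun j => 1 - v j) k - linForm (fun j => 1 - v j) k ^ 2 / 2 ≤ 1 - prodPow v k := by
  have hT : 0 ≤ linForm (fun j => 1 - v j) k :=
    Finset.sum_nonneg fun j _ => mul_nonneg (by linarith [(hv j).2]) (Nat.cast_nonneg _)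
  have hexp : prodPow v k ≤ Real.exp (-linForm (fun j => 1 - v j) k) := by
    rw [linForm, ← Finset.sum_neg_distrib, Real.exp_sum]
    refine Finset.prod_le_prod (fun j _ => pow_nonneg (hv j).1 _) fun j _ => ?_
    calc v j ^ k j ≤ Real.exp (v j - 1) ^ k j := by
          gcongr
          · exact (hv j).1
          · linarith [Real.add_one_le_exp (v j - 1)]
      _ = Real.exp (-((1 - v j) * k j)) := by rw [← Real.exp_nat_mul]; ring_nf
  linarith [exp_neg_le_one_sub_add_sq_div_two hT]

omit hv in
lemma prodPow_update {q : Fin N} (hvq : v q = 1) (K : ℝ) :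
    prodPow (Function.update v q K) k = K ^ k q * prodPow v k := by
  classical
  simp only [prodPow, ← Finset.mul_prod_erase Finset.univ _ (Finset.mem_univ q),
    Function.update_self, hvq, one_pow, one_mul]
  congr 1
  exact Finset.prod_congr rfl fun j hj => by rw [Function.update_of_ne (Finset.ne_of_mem_erase hj)]

end Monomial

structure IsSquareIntegrableLaw {N : ℕ} (p : (Fin N → ℕ) → ℝ) : Prop where
  nonneg : ∀ k, 0 ≤ p k
  hasSum_one : HasSum p 1
  summable_mul_coord_mul : ∀ j l, Summable fun k => p k * ((k j : ℝ) * k l)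

section Law

variable {N : ℕ} {p : (Fin N → ℕ) → ℝ}

def genFun (p : (Fin N → ℕ) → ℝ) (v : Fin N → ℝ) : ℝ := ∑' k, p k * prodPow v k

def mean (p : (Fin N → ℕ) → ℝ) (j : Fin N) : ℝ := ∑' k, p k * (k j : ℝ)

def moment2 (p : (Fin N → ℕ) → ℝ) (j l : Fin N) : ℝ := ∑' k, p k * ((k j : ℝ) * k l)

namespace IsSquareIntegrableLaw

variable (hp : IsSquareIntegrableLaw p)
include hp

lemma summable_mul_of_abs_le_one {f : (Fin N → ℕ) → ℝ} (hf : ∀ k, |f k| ≤ 1) :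
    Summable fun k => p k * f k :=
  hp.hasSum_one.summable.of_norm_bounded fun k => by
    rw [norm_mul, Real.norm_of_nonneg (hp.nonneg k)]
    exact mul_le_of_le_one_right (hp.nonneg k) (hf k)

lemma hasSum_mean (j : Fin N) : HasSum (fun k => p k * (k j : ℝ)) (mean p j) :=
  (Summable.of_nonneg_of_le (fun k => mul_nonneg (hp.nonneg k) (Nat.cast_nonneg _))
    (fun k => mul_le_mul_of_nonneg_left (by exact_mod_cast Nat.le_mul_self (k j)) (hp.nonneg k))
    (hp.summable_mul_coord_mul j j)).hasSum

lemma hasSum_moment2 (j l : Fin N) :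
    HasSum (fun k => p k * ((k j : ℝ) * k l)) (moment2 p j l) :=
  (hp.summable_mul_coord_mul j l).hasSum

lemma hasSum_mul_linForm (c : Fin N → ℝ) :
    HasSum (fun k => p k * linForm c k) (∑ j, c j * mean p j) := by
  simpa [linForm, Finset.mul_sum, mul_left_comm] using
    hasSum_sum fun j _ => (hp.hasSum_mean j).mul_left (c j)

lemma hasSum_mul_coord_mul_linForm (q : Fin N) (c : Fin N → ℝ) :
    HasSum (fun k => p k * (k q * linForm c k)) (∑ l, c l * moment2 p q l) := by
  simpa [linForm, Finset.mul_sum, mul_left_comm] using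
    hasSum_sum fun l _ => (hp.hasSum_moment2 q l).mul_left (c l)

lemma hasSum_mul_linForm_sq (c : Fin N → ℝ) :
    HasSum (fun k => p k * linForm c k ^ 2) (∑ j, ∑ l, c j * c l * moment2 p j l) := by
  have hfun : (fun k => p k * linForm c k ^ 2)
      = fun k => ∑ j, c j * (p k * (k j * linForm c k)) := by
    ext k
    rw [sq]
    nth_rewrite 1 [linForm]
    rw [Finset.sum_mul, Finset.mul_sum]
    exact Finset.sum_congr rfl fun j _ => by ring
  rw [hfun]
  simpa only [Finset.mul_sum, mul_assoc] using
    hasSum_sum (s := Finset.univ) fun j _ => (hp.hasSum_mul_coord_mul_linForm j c).mul_left (c j)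

variable {v : Fin N → ℝ} (hv : ∀ j, v j ∈ Set.Icc (0 : ℝ) 1)
include hv

lemma hasSum_genFun : HasSum (fun k => p k * prodPow v k) (genFun p v) :=
  (hp.summable_mul_of_abs_le_one fun k =>
    abs_le.2 ⟨by linarith [(prodPow_mem_Icc hv k).1], (prodPow_mem_Icc hv k).2⟩).hasSum

lemma genFun_mem_Icc : genFun p v ∈ Set.Icc (0 : ℝ) 1 :=
  ⟨(hp.hasSum_genFun hv).nonneg fun k => mul_nonneg (hp.nonneg k) (prodPow_mem_Icc hv k).1,
    hasSum_le (fun k => mul_le_of_le_one_right (hp.nonneg k) (prodPow_mem_Icc hv k).2)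
      (hp.hasSum_genFun hv) hp.hasSum_one⟩

lemma hasSum_one_sub_genFun : HasSum (fun k => p k * (1 - prodPow v k)) (1 - genFun p v) := by
  simpa [mul_sub] using hp.hasSum_one.sub (hp.hasSum_genFun hv)

lemma one_sub_genFun_le : 1 - genFun p v ≤ ∑ j, (1 - v j) * mean p j :=
  hasSum_le (fun k => mul_le_mul_of_nonneg_left (one_sub_prodPow_le_linForm hv k) (hp.nonneg k))
    (hp.hasSum_one_sub_genFun hv) (hp.hasSum_mul_linForm _)

lemma le_one_sub_genFun :
    ∑ j, (1 - v j) * mean p j - (∑ j, ∑ l, (1 - v j) * (1 - v l) * moment2 p j l) / 2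
      ≤ 1 - genFun p v :=
  hasSum_le
    (fun k => by
      have := mul_le_mul_of_nonneg_left (linForm_sub_sq_le_one_sub_prodPow hv k) (hp.nonneg k)
      linarith)
    ((hp.hasSum_mul_linForm _).sub ((hp.hasSum_mul_linForm_sq _).div_const 2))
    (hp.hasSum_one_sub_genFun hv)

lemma genFun_lt_one {j : Fin N} (hvj : v j < 1) (hm : 0 < mean p j) : genFun p v < 1 := by
  obtain ⟨k, hk, hkj⟩ : ∃ k, 0 < p k ∧ 1 ≤ k j := by
    by_contra! h
    have hzero : ∀ k, p k * (k j : ℝ) = 0 := fun k => by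
      rcases (hp.nonneg k).eq_or_lt with hk | hk
      · rw [← hk, zero_mul]
      · rw [Nat.lt_one_iff.1 (h k hk), Nat.cast_zero, mul_zero]
    simp [mean, hzero] at hm
  refine hasSum_lt (f := fun k => p k * prodPow v k) (i := k)
    (fun k => mul_le_of_le_one_right (hp.nonneg k) (prodPow_mem_Icc hv k).2) ?_
    (hp.hasSum_genFun hv) hp.hasSum_one
  have hlt : prodPow v k < 1 := by
    classical
    calc prodPow v k = v j ^ k j * ∏ i ∈ Finset.univ.erase j, v i ^ k i :=
          (Finset.mul_prod_erase _ _ (Finset.mem_univ j)).symm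
      _ ≤ v j ^ k j := mul_le_of_le_one_right (pow_nonneg (hv j).1 _)
          (Finset.prod_le_one (fun i _ => pow_nonneg (hv i).1 _)
            fun i _ => pow_le_one₀ (hv i).1 (hv i).2)
      _ ≤ v j := pow_le_of_le_one (hv j).1 (hv j).2 (by omega)
      _ < 1 := hvj
  simpa using mul_lt_mul_of_pos_left hlt hk

end IsSquareIntegrableLaw

end Law

section FixedPoint

variable {N : ℕ} {p : (Fin N → ℕ) → ℝ} {q : Fin N}

def rho (p : (Fin N → ℕ) → ℝ) (q : Fin N) (K : ℝ) : ℝ := ∑' k, p k * taylorRem (k q) K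

def crossTerm (p : (Fin N → ℕ) → ℝ) (q : Fin N) (v : Fin N → ℝ) (K : ℝ) : ℝ :=
  ∑' k, p k * (K ^ k q * (1 - prodPow v k))

lemma update_mem_Icc {v : Fin N → ℝ} (hv : ∀ j, v j ∈ Set.Icc (0 : ℝ) 1) {K : ℝ}
    (hK : K ∈ Set.Icc (0 : ℝ) 1) (j : Fin N) : Function.update v q K j ∈ Set.Icc (0 : ℝ) 1 := by
  rcases eq_or_ne j q with rfl | h
  · simpa using hK
  · simpa [Function.update_of_ne h] using hv j

namespace IsSquareIntegrableLaw

variable (hp : IsSquareIntegrableLaw p)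
include hp

lemma taylorRem_mul_le (k : Fin N → ℕ) {K : ℝ} (hK : K ∈ Set.Icc (0 : ℝ) 1) :
    ‖p k * taylorRem (k q) K‖ ≤ p k * ((k q : ℝ) * k q) := by
  rw [Real.norm_of_nonneg (mul_nonneg (hp.nonneg k) (taylorRem_nonneg _ hK.1))]
  exact mul_le_mul_of_nonneg_left (taylorRem_le_mul_self _ hK) (hp.nonneg k)

lemma hasSum_rho {K : ℝ} (hK : K ∈ Set.Icc (0 : ℝ) 1) :
    HasSum (fun k => p k * taylorRem (k q) K) (rho p q K) :=
  ((hp.summable_mul_coord_mul q q).of_norm_bounded fun k => hp.taylorRem_mul_le k hK).hasSum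

lemma continuousOn_rho : ContinuousOn (rho p q) (Set.Icc 0 1) :=
  continuousOn_tsum (fun _ => (continuous_const.mul (continuous_taylorRem _)).continuousOn)
    (hp.summable_mul_coord_mul q q) fun k _ hK => hp.taylorRem_mul_le k hK

lemma exists_pos_le_rho (hρ : 0 < rho p q 1) :
    ∃ c > 0, ∀ K ∈ Set.Icc (0 : ℝ) 1, c ≤ rho p q K := by
  obtain ⟨k, hk, hkq⟩ : ∃ k, 0 < p k ∧ 2 ≤ k q := by
    by_contra! h
    have hzero : ∀ k, p k * taylorRem (k q) 1 = 0 := fun k => by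
      rcases (hp.nonneg k).eq_or_lt with hk | hk
      · rw [← hk, zero_mul]
      · rw [taylorRem_one_of_le_one (by have := h k hk; omega), mul_zero]
    simp [rho, hzero] at hρ
  refine ⟨p k, hk, fun K hK => ?_⟩
  calc p k ≤ p k * taylorRem (k q) K := le_mul_of_one_le_right hk.le (one_le_taylorRem hkq hK.1)
    _ ≤ rho p q K := le_hasSum (hp.hasSum_rho hK) k fun k' _ =>
        mul_nonneg (hp.nonneg k') (taylorRem_nonneg _ hK.1)

variable {v : Fin N → ℝ} (hv : ∀ j, v j ∈ Set.Icc (0 : ℝ) 1) {K : ℝ} (hK : K ∈ Set.Icc (0 : ℝ) 1)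
include hv hK

lemma hasSum_crossTerm :
    HasSum (fun k => p k * (K ^ k q * (1 - prodPow v k))) (crossTerm p q v K) := by
  refine (hp.summable_mul_of_abs_le_one fun k => ?_).hasSum
  have hP := prodPow_mem_Icc hv k
  rw [abs_of_nonneg (mul_nonneg (pow_nonneg hK.1 _) (by linarith [hP.2]))]
  exact mul_le_one₀ (pow_le_one₀ hK.1 hK.2) (by linarith [hP.2]) (by linarith [hP.1])

lemma one_sub_genFun_update (hvq : v q = 1) :
    1 - genFun p (Function.update v q K)
      = mean p q * (1 - K) - (1 - K) ^ 2 * rho p q K + crossTerm p q v K := by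
  have hsplit : (fun k => p k * (1 - prodPow (Function.update v q K) k))
      = fun k => p k * k q * (1 - K) - p k * taylorRem (k q) K * (1 - K) ^ 2
          + p k * (K ^ k q * (1 - prodPow v k)) := by
    ext k
    rw [prodPow_update k hvq]
    linear_combination (-p k) * pow_eq_taylorRem (k q) K
  have h := hp.hasSum_one_sub_genFun (update_mem_Icc (q := q) hv hK)
  rw [hsplit] at h
  rw [h.unique ((((hp.hasSum_mean q).mul_right (1 - K)).sub
    ((hp.hasSum_rho hK).mul_right ((1 - K) ^ 2))).add (hp.hasSum_crossTerm hv hK))]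
  ring

lemma crossTerm_le : crossTerm p q v K ≤ 1 - genFun p v :=
  hasSum_le (fun k => mul_le_mul_of_nonneg_left
      (mul_le_of_le_one_left (by linarith [(prodPow_mem_Icc hv k).2]) (pow_le_one₀ hK.1 hK.2))
      (hp.nonneg k))
    (hp.hasSum_crossTerm hv hK) (hp.hasSum_one_sub_genFun hv)

lemma le_crossTerm :
    1 - genFun p v - (1 - K) * ∑ j, (1 - v j) * moment2 p q j ≤ crossTerm p q v K := by
  refine hasSum_le (fun k => ?_) ((hp.hasSum_one_sub_genFun hv).sub
    ((hp.hasSum_mul_coord_mul_linForm q _).mul_left (1 - K))) (hp.hasSum_crossTerm hv hK)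
  have hbern : 1 - K ^ k q ≤ k q * (1 - K) := by
    nlinarith [pow_eq_taylorRem (k q) K, taylorRem_nonneg (k q) hK.1]
  have hP := one_sub_prodPow_le_linForm hv k
  have hprod : (1 - K ^ k q) * (1 - prodPow v k) ≤ (k q * (1 - K)) * linForm (fun j => 1 - v j) k :=
    mul_le_mul hbern hP (by linarith [(prodPow_mem_Icc hv k).2])
      (mul_nonneg (Nat.cast_nonneg _) (by linarith [hK.2]))
  nlinarith [hp.nonneg k]

omit hK in
lemma continuousOn_genFun_update :
    ContinuousOn (fun K => genFun p (Function.update v q K)) (Set.Icc 0 1) :=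
  continuousOn_tsum (fun k => by unfold prodPow; fun_prop) hp.hasSum_one.summable
    fun k K hK => by
      have hP := prodPow_mem_Icc (update_mem_Icc (q := q) hv hK) k
      rw [Real.norm_of_nonneg (mul_nonneg (hp.nonneg k) hP.1)]
      exact mul_le_of_le_one_right (hp.nonneg k) hP.2

end IsSquareIntegrableLaw

end FixedPoint

lemma sInf_fixedPoints_mem {f : ℝ → ℝ} (hf : ContinuousOn f (Set.Icc 0 1)) (h0 : 0 ≤ f 0)
    (h1 : f 1 ≤ 1) :
    sInf {K | K ∈ Set.Icc (0 : ℝ) 1 ∧ K = f K} ∈ {K | K ∈ Set.Icc (0 : ℝ) 1 ∧ K = f K} := by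
  have hset : {K | K ∈ Set.Icc (0 : ℝ) 1 ∧ K = f K}
      = Set.Icc 0 1 ∩ (fun K => K - f K) ⁻¹' {0} := by
    ext K
    simp [sub_eq_zero]
  rw [hset]
  refine IsClosed.csInf_mem ?_ ?_ (bddBelow_Icc.mono Set.inter_subset_left)
  · exact (continuousOn_id.sub hf).preimage_isClosed_of_isClosed isClosed_Icc isClosed_singleton
  · obtain ⟨K, hK, hfK⟩ := intermediate_value_Icc' zero_le_one (hf.sub continuousOn_id)
      (show (0 : ℝ) ∈ Set.Icc (f 1 - 1) (f 0 - 0) from ⟨by linarith, by linarith⟩)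
    exact ⟨K, hK, by simpa [sub_eq_zero, eq_comm] using hfK⟩

section Asymptotics

variable {α : Type*} {l : Filter α}

lemma tendsto_zero_of_tendsto_div {f e : α → ℝ} {c : ℝ} (he : Tendsto e l (𝓝 0))
    (hepos : ∀ᶠ a in l, 0 < e a) (h : Tendsto (fun a => f a / e a) l (𝓝 c)) :
    Tendsto f l (𝓝 0) := by
  simpa using (he.mul h).congr' (by filter_upwards [hepos] with a ha; field_simp)

lemma tendsto_sum_mul_div {ι : Type*} [Fintype ι] {f : α → ι → ℝ} {e : α → ℝ} {r w : ι → ℝ}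
    (hr : ∀ j, Tendsto (fun a => f a j / e a) l (𝓝 (r j))) :
    Tendsto (fun a => (∑ j, f a j * w j) / e a) l (𝓝 (∑ j, r j * w j)) := by
  simp_rw [Finset.sum_div, mul_div_right_comm]
  exact tendsto_finsetSum _ fun j _ => (hr j).mul_const _

lemma tendsto_one_sub_genFun_div {N : ℕ} {p : (Fin N → ℕ) → ℝ} (hp : IsSquareIntegrableLaw p)
    {u : α → Fin N → ℝ} {e : α → ℝ} {r : Fin N → ℝ}
    (hu : ∀ᶠ a in l, ∀ j, u a j ∈ Set.Icc (0 : ℝ) 1) (he : Tendsto e l (𝓝 0))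
    (hepos : ∀ᶠ a in l, 0 < e a) (hr : ∀ j, Tendsto (fun a => (1 - u a j) / e a) l (𝓝 (r j))) :
    Tendsto (fun a => (1 - genFun p (u a)) / e a) l (𝓝 (∑ j, r j * mean p j)) := by
  have hS := tendsto_sum_mul_div (w := mean p) hr
  have hQ : Tendsto (fun a => (∑ j, ∑ i, (1 - u a j) * (1 - u a i) * moment2 p j i) / e a) l
      (𝓝 0) := by
    have h := tendsto_finsetSum Finset.univ fun j _ =>
      (tendsto_zero_of_tendsto_div he hepos (hr j)).mul (tendsto_sum_mul_div (w := moment2 p j) hr)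
    simp only [zero_mul, Finset.sum_const_zero] at h
    refine h.congr fun a => ?_
    simp only [Finset.sum_div, Finset.mul_sum]
    exact Finset.sum_congr rfl fun j _ => Finset.sum_congr rfl fun i _ => by ring
  refine tendsto_of_tendsto_of_tendsto_of_le_of_le' (by simpa using hS.sub (hQ.div_const 2)) hS
    ?_ ?_ <;> filter_upwards [hu, hepos] with a ha hea
  · calc _ = (∑ j, (1 - u a j) * mean p j
            - (∑ j, ∑ i, (1 - u a j) * (1 - u a i) * moment2 p j i) / 2) / e a := by ring
      _ ≤ _ := div_le_div_of_nonneg_right (hp.le_one_sub_genFun ha) hea.le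
  · exact div_le_div_of_nonneg_right (hp.one_sub_genFun_le ha) hea.le

theorem tendsto_sq_one_sub_fixedPoint_div {N : ℕ} {p : (Fin N → ℕ) → ℝ}
    (hp : IsSquareIntegrableLaw p) {q : Fin N} (hcrit : mean p q = 1) (hρ : 0 < rho p q 1)
    {u : α → Fin N → ℝ} {K e : α → ℝ} {r : Fin N → ℝ}
    (hu : ∀ᶠ a in l, (∀ j, u a j ∈ Set.Icc (0 : ℝ) 1) ∧ u a q = 1)
    (hK : ∀ᶠ a in l, K a ∈ Set.Icc (0 : ℝ) 1 ∧ K a = genFun p (Function.update (u a) q (K a)))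
    (he : Tendsto e l (𝓝 0)) (hepos : ∀ᶠ a in l, 0 < e a)
    (hr : ∀ j, Tendsto (fun a => (1 - u a j) / e a) l (𝓝 (r j))) :
    Tendsto (fun a => (1 - K a) ^ 2 / e a) l (𝓝 ((∑ j, r j * mean p j) / rho p q 1)) := by
  obtain ⟨c, hc, hcρ⟩ := hp.exists_pos_le_rho hρ
  have hG := tendsto_one_sub_genFun_div hp (hu.mono fun a ha => ha.1) he hepos hr
  have hkey : ∀ᶠ a in l, (1 - K a) ^ 2 * rho p q (K a) = crossTerm p q (u a) (K a) := by
    filter_upwards [hu, hK] with a ha hKa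
    have h := hp.one_sub_genFun_update ha.1 hKa.1 ha.2
    rw [← hKa.2, hcrit] at h
    linarith
  have hx : Tendsto (fun a => 1 - K a) l (𝓝 0) := by
    have hsq : Tendsto (fun a => (1 - K a) ^ 2) l (𝓝 0) := by
      refine tendsto_of_tendsto_of_tendsto_of_le_of_le' tendsto_const_nhds
        (by simpa using (tendsto_zero_of_tendsto_div he hepos hG).div_const c)
        (Eventually.of_forall fun a => sq_nonneg _) ?_
      filter_upwards [hu, hK, hkey] with a ha hKa hkeya
      rw [le_div_iff₀ hc]
      calc (1 - K a) ^ 2 * c ≤ (1 - K a) ^ 2 * rho p q (K a) := by gcongr; exact hcρ _ hKa.1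
        _ ≤ 1 - genFun p (u a) := hkeya ▸ hp.crossTerm_le ha.1 hKa.1
    have hsqrt := hsq.sqrt
    rw [Real.sqrt_zero] at hsqrt
    refine hsqrt.congr' ?_
    filter_upwards [hK] with a hKa
    exact Real.sqrt_sq (by linarith [hKa.1.2])
  have hρK : Tendsto (fun a => rho p q (K a)) l (𝓝 (rho p q 1)) :=
    (hp.continuousOn_rho 1 ⟨zero_le_one, le_rfl⟩).tendsto.comp <| tendsto_nhdsWithin_iff.2
      ⟨by simpa using (tendsto_const_nhds (x := (1 : ℝ))).sub hx, hK.mono fun a h => h.1⟩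
  have hB : Tendsto (fun a => crossTerm p q (u a) (K a) / e a) l (𝓝 (∑ j, r j * mean p j)) := by
    refine tendsto_of_tendsto_of_tendsto_of_le_of_le'
      (by simpa using hG.sub (hx.mul (tendsto_sum_mul_div (w := moment2 p q) hr))) hG ?_ ?_
      <;> filter_upwards [hu, hK, hepos] with a ha hKa hea
    · calc _ = (1 - genFun p (u a) - (1 - K a) * ∑ j, (1 - u a j) * moment2 p q j) / e a := by
            ring
        _ ≤ _ := div_le_div_of_nonneg_right (hp.le_crossTerm ha.1 hKa.1) hea.le
    · exact div_le_div_of_nonneg_right (hp.crossTerm_le ha.1 hKa.1) hea.le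
  refine (hB.div hρK hρ.ne').congr' ?_
  filter_upwards [hkey, hK] with a hkeya hKa
  have := (hc.trans_le (hcρ _ hKa.1)).ne'
  simp only [Pi.div_apply, ← hkeya]
  field_simp

end Asymptotics

section Rates

variable {α : Type*} {l : Filter α}

lemma tendsto_div_of_rpow_lt {w f g : α → ℝ} {a b c d : ℝ} (hw : Tendsto w l (𝓝 0))
    (hwpos : ∀ᶠ x in l, 0 < w x) (hba : b < a) (hf : Tendsto (fun x => f x / w x ^ a) l (𝓝 c))
    (hg : Tendsto (fun x => g x / w x ^ b) l (𝓝 d)) (hd : d ≠ 0) :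
    Tendsto (fun x => f x / g x) l (𝓝 0) := by
  have hpow : Tendsto (fun x => w x ^ (a - b)) l (𝓝 0) := by
    simpa [Real.zero_rpow (sub_pos.2 hba).ne'] using hw.rpow_const (Or.inr (sub_pos.2 hba).le)
  have h := (hf.mul hpow).div hg hd
  rw [mul_zero, zero_div] at h
  refine h.congr' ?_
  filter_upwards [hwpos] with x hx
  have ha := Real.rpow_pos_of_pos hx a
  have hb := Real.rpow_pos_of_pos hx b
  simp only [Pi.div_apply]
  rw [Real.rpow_sub hx]
  field_simp

lemma tendsto_div_rpow_of_sq_div {x e w : α → ℝ} {a c d : ℝ} (hx : ∀ᶠ t in l, 0 ≤ x t)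
    (hwpos : ∀ᶠ t in l, 0 < w t) (hepos : ∀ᶠ t in l, 0 < e t)
    (h1 : Tendsto (fun t => x t ^ 2 / e t) l (𝓝 c))
    (h2 : Tendsto (fun t => e t / w t ^ (2 * a)) l (𝓝 d)) :
    Tendsto (fun t => x t / w t ^ a) l (𝓝 (√(c * d))) := by
  refine (h1.mul h2).sqrt.congr' ?_
  filter_upwards [hx, hwpos, hepos] with t hxt hwt het
  have hwa := Real.rpow_pos_of_pos hwt a
  rw [mul_comm 2 a, Real.rpow_mul hwt.le, Real.rpow_two, ← Real.sqrt_sq (div_nonneg hxt hwa.le)]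
  congr 1
  field_simp

end Rates

namespace HypA

variable {N : ℕ} {η : ℕ → (Fin N → ℕ) → ℝ} (hA : HypA N η) {i : ℕ} (hi : i < N)
include hA hi

lemma isSquareIntegrableLaw : IsSquareIntegrableLaw (η i) :=
  ⟨hA.nonneg i hi, hA.total i hi, fun j l => by simpa [coord] using hA.secondMom i hi j l⟩

lemma mean_self : mean (η i) ⟨i, hi⟩ = 1 := by
  simpa [mean, coord, hi] using (hA.critical i hi).tsum_eq

lemma rho_one : rho (η i) ⟨i, hi⟩ 1 = bCoef N η i := by
  have hp := hA.isSquareIntegrableLaw hi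
  have h2 := hp.hasSum_moment2 ⟨i, hi⟩ ⟨i, hi⟩
  have h1 := hp.hasSum_mean ⟨i, hi⟩
  rw [hA.mean_self hi] at h1
  have hρ : HasSum (fun k => η i k * taylorRem (k ⟨i, hi⟩) 1)
      ((moment2 (η i) ⟨i, hi⟩ ⟨i, hi⟩ - 1) / 2) :=
    ((h2.sub h1).div_const 2).congr_fun fun k => by rw [taylorRem_one]; ring
  have hb : HasSum (fun k => η i k * ((coord k i : ℝ) - 1) ^ 2)
      (moment2 (η i) ⟨i, hi⟩ ⟨i, hi⟩ - 1 * 2 + 1) := by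
    refine ((h2.sub (h1.mul_right 2)).add hp.hasSum_one).congr_fun fun k => ?_
    simp only [coord, hi, dite_true]
    ring
  rw [(hp.hasSum_rho ⟨zero_le_one, le_rfl⟩).unique hρ, bCoef, hb.tsum_eq]
  ring

end HypA

lemma mean_succ_eq_mCoef {N : ℕ} (η : ℕ → (Fin N → ℕ) → ℝ) {i : ℕ} (hi : i + 1 < N) :
    mean (η i) ⟨i + 1, hi⟩ = mCoef N η i := by
  simp [mean, mCoef, meanM, coord, hi]

lemma dAux_pos {b m : ℕ → ℝ} {t : ℕ} (hb : ∀ s ≤ t, 0 < b s) (hm : ∀ s ≤ t, 0 < m s) :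
    ∀ r, 0 < dAux b m t r
  | 0 => Real.sqrt_pos.2 (div_pos (hm t le_rfl) (hb t le_rfl))
  | r + 1 => Real.sqrt_pos.2 (div_pos (mul_pos (hm _ (Nat.sub_le _ _)) (dAux_pos hb hm r))
      (hb _ (Nat.sub_le _ _)))

lemma tendsto_one_sub_Ico : Tendsto (fun t : ℝ => 1 - t) (𝓝[Set.Ico 0 1] 1) (𝓝 0) :=
  ((continuous_const.sub continuous_id).tendsto' 1 0 (sub_self 1)).mono_left nhdsWithin_le_nhds

lemma tendsto_one_sub_rpow_Ico {c : ℝ} (hc : 0 < c) :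
    Tendsto (fun t : ℝ => (1 - t) ^ c) (𝓝[Set.Ico 0 1] 1) (𝓝 0) := by
  simpa [Real.zero_rpow hc.ne'] using tendsto_one_sub_Ico.rpow_const (Or.inr hc.le)

lemma eventually_one_sub_pos : ∀ᶠ t : ℝ in 𝓝[Set.Ico 0 1] 1, 0 < 1 - t :=
  eventually_nhdsWithin_of_forall fun _ ht => sub_pos.2 ht.2

section Levels

variable (N : ℕ) (η : ℕ → (Fin N → ℕ) → ℝ) (τ : ℕ)

def Klevel (q : ℕ) (t : ℝ) : ℝ := if q ≤ τ then Kfix N η τ t (τ - q) else t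

def Kenv (t : ℝ) (q : ℕ) : Fin N → ℝ :=
  fun j => if q < (j : ℕ) ∧ (j : ℕ) ≤ τ + 1 then Klevel N η τ j t else 1

def Dlevel (q : ℕ) : ℝ := if q ≤ τ then dAux (bCoef N η) (mCoef N η) τ (τ - q) else 1

def LevelAsymp (q : ℕ) : Prop :=
  (∀ t ∈ Set.Ico (0 : ℝ) 1, Klevel N η τ q t ∈ Set.Ico (0 : ℝ) 1) ∧
    Tendsto (fun t => (1 - Klevel N η τ q t) / (1 - t) ^ ((1 / 2 : ℝ) ^ (τ + 1 - q)))
      (𝓝[Set.Ico 0 1] 1) (𝓝 (Dlevel N η τ q))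

variable {N η τ}

lemma Kfix_eq_sInf {q : ℕ} (hq : q ≤ τ) (hqN : q < N) (t : ℝ) :
    Kfix N η τ t (τ - q) = sInf {K | K ∈ Set.Icc (0 : ℝ) 1 ∧
      K = genFun (η q) (Function.update (Kenv N η τ t q) ⟨q, hqN⟩ K)} := by
  rw [Kfix, Nat.sub_sub_self hq]
  congr! 4 with K
  refine Iff.of_eq (congrArg (K = ·) (congrArg (pgf N η q) (funext fun j => ?_)))
  by_cases hj : (j : ℕ) = q
  · obtain rfl : j = ⟨q, hqN⟩ := Fin.ext hj
    simp
  · rw [Function.update_of_ne (fun h => hj (by rw [h]))]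
    simp only [Kenv, Klevel, hj, if_false]
    split_ifs <;> first | rfl | omega

lemma Dlevel_succ {q : ℕ} (hq : q ≤ τ) :
    Dlevel N η τ q = √(mCoef N η q * Dlevel N η τ (q + 1) / bCoef N η q) := by
  rcases hq.lt_or_eq with hq' | rfl
  · rw [Dlevel, Dlevel, if_pos hq, if_pos (show q + 1 ≤ τ by omega),
      show τ - q = τ - (q + 1) + 1 by omega, dAux, show τ - (τ - (q + 1) + 1) = q by omega]
  · simp [Dlevel, dAux]

lemma Dlevel_pos (hA : HypA N η) (hτ : τ + 1 < N) (q : ℕ) : 0 < Dlevel N η τ q := by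
  unfold Dlevel
  split_ifs
  · exact dAux_pos (fun s hs => hA.bPos s (by omega)) (fun s hs => hA.mPos s (by omega)) _
  · exact one_pos

lemma levelAsymp_top : LevelAsymp N η τ (τ + 1) := by
  simp only [LevelAsymp, Klevel, Dlevel, show ¬τ + 1 ≤ τ by omega, if_false, Nat.sub_self,
    pow_zero, Real.rpow_one]
  refine ⟨fun t ht => ht, tendsto_const_nhds.congr' ?_⟩
  filter_upwards [eventually_one_sub_pos] with t ht
  exact (div_self ht.ne').symm

section Step

variable (hA : HypA N η) (hτ : τ + 1 < N) {q : ℕ} (hq : q ≤ τ)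
  (IH : ∀ j, q < j → j ≤ τ + 1 → LevelAsymp N η τ j)
include IH

lemma Kenv_mem_Icc {t : ℝ} (ht : t ∈ Set.Ico (0 : ℝ) 1) (j : Fin N) :
    Kenv N η τ t q j ∈ Set.Icc (0 : ℝ) 1 := by
  unfold Kenv
  split_ifs with h
  · exact Set.Ico_subset_Icc_self ((IH j h.1 h.2).1 t ht)
  · exact ⟨zero_le_one, le_rfl⟩

include hA hτ hq

lemma Klevel_mem_fixedPoints {t : ℝ} (ht : t ∈ Set.Ico (0 : ℝ) 1) :
    Klevel N η τ q t ∈ Set.Icc (0 : ℝ) 1 ∧ Klevel N η τ q t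
      = genFun (η q) (Function.update (Kenv N η τ t q) ⟨q, by omega⟩ (Klevel N η τ q t)) := by
  have hp := hA.isSquareIntegrableLaw (i := q) (by omega)
  have hv := Kenv_mem_Icc IH ht
  rw [Klevel, if_pos hq, Kfix_eq_sInf hq (by omega)]
  exact sInf_fixedPoints_mem (hp.continuousOn_genFun_update hv)
    (hp.genFun_mem_Icc (update_mem_Icc hv ⟨le_rfl, zero_le_one⟩)).1
    (hp.genFun_mem_Icc (update_mem_Icc hv ⟨zero_le_one, le_rfl⟩)).2

lemma Klevel_lt_one {t : ℝ} (ht : t ∈ Set.Ico (0 : ℝ) 1) : Klevel N η τ q t < 1 := by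
  obtain ⟨hmem, hfix⟩ := Klevel_mem_fixedPoints hA hτ hq IH ht
  refine hmem.2.lt_of_ne fun h1 => ?_
  have hnext : Kenv N η τ t q ⟨q + 1, by omega⟩ < 1 := by
    simpa [Kenv, show q + 1 ≤ τ + 1 by omega] using ((IH (q + 1) (by omega) (by omega)).1 t ht).2
  have hlt := (hA.isSquareIntegrableLaw (i := q) (by omega)).genFun_lt_one (Kenv_mem_Icc IH ht)
    hnext (by rw [mean_succ_eq_mCoef]; exact hA.mPos q (by omega))
  rw [h1, Function.update_eq_self_iff.2 (by simp [Kenv])] at hfix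
  exact hlt.ne hfix.symm

lemma tendsto_one_sub_Kenv_div (j : Fin N) :
    Tendsto (fun t => (1 - Kenv N η τ t q j) / (1 - Klevel N η τ (q + 1) t)) (𝓝[Set.Ico 0 1] 1)
      (𝓝 (if j = ⟨q + 1, by omega⟩ then 1 else 0)) := by
  have hnext := IH (q + 1) (by omega) (by omega)
  by_cases hj : j = ⟨q + 1, by omega⟩
  · subst hj
    refine tendsto_const_nhds.congr' ?_
    filter_upwards [self_mem_nhdsWithin] with t ht
    have := sub_pos.2 (hnext.1 t ht).2
    simp [Kenv, hq, this.ne']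
  rw [if_neg hj]
  have hj' : (j : ℕ) ≠ q + 1 := fun h => hj (Fin.ext h)
  by_cases hjq : q < (j : ℕ) ∧ (j : ℕ) ≤ τ + 1
  · simp only [Kenv, if_pos hjq]
    refine tendsto_div_of_rpow_lt tendsto_one_sub_Ico eventually_one_sub_pos ?_
      (IH j hjq.1 hjq.2).2 hnext.2 (Dlevel_pos hA hτ _).ne'
    exact pow_lt_pow_right_of_lt_one₀ (by norm_num) (by norm_num) (by omega)
  · simp [Kenv, hjq]

theorem levelAsymp_of_succ : LevelAsymp N η τ q := by
  have hqN : q < N := by omega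
  have hnext := IH (q + 1) (by omega) (by omega)
  have hepos : ∀ᶠ t in 𝓝[Set.Ico 0 1] 1, 0 < 1 - Klevel N η τ (q + 1) t :=
    eventually_nhdsWithin_of_forall fun t ht => sub_pos.2 (hnext.1 t ht).2
  have hsq := tendsto_sq_one_sub_fixedPoint_div (hA.isSquareIntegrableLaw hqN) (hA.mean_self hqN)
    (by rw [hA.rho_one]; exact hA.bPos q hqN)
    (eventually_nhdsWithin_of_forall fun t ht => ⟨Kenv_mem_Icc IH ht, by simp [Kenv]⟩)
    (eventually_nhdsWithin_of_forall fun t ht => Klevel_mem_fixedPoints hA hτ hq IH ht)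
    (tendsto_zero_of_tendsto_div (tendsto_one_sub_rpow_Ico (by positivity))
      (eventually_one_sub_pos.mono fun t ht => Real.rpow_pos_of_pos ht _) hnext.2) hepos
    (tendsto_one_sub_Kenv_div hA hτ hq IH)
  simp only [ite_mul, one_mul, zero_mul, Finset.sum_ite_eq', Finset.mem_univ, if_true,
    mean_succ_eq_mCoef, hA.rho_one] at hsq
  refine ⟨fun t ht =>
    ⟨(Klevel_mem_fixedPoints hA hτ hq IH ht).1.1, Klevel_lt_one hA hτ hq IH ht⟩, ?_⟩
  rw [Dlevel_succ hq, mul_div_right_comm]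
  refine tendsto_div_rpow_of_sq_div (eventually_nhdsWithin_of_forall fun t ht =>
    sub_nonneg.2 (Klevel_mem_fixedPoints hA hτ hq IH ht).1.2) eventually_one_sub_pos hepos hsq ?_
  rw [show τ + 1 - q = τ + 1 - (q + 1) + 1 by omega, pow_succ, mul_comm, mul_assoc]
  simpa using hnext.2

end Step

theorem levelAsymp (hA : HypA N η) (hτ : τ + 1 < N) (q : ℕ) (hq : q ≤ τ + 1) :
    LevelAsymp N η τ q :=
  if h : q = τ + 1 then h ▸ levelAsymp_top
  else levelAsymp_of_succ hA hτ (by omega) fun j hqj hj => levelAsymp hA hτ j hj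
termination_by τ + 1 - q

end Levels

theorem emigrant_generating_function_tail_general
    (N : ℕ) (η : ℕ → (Fin N → ℕ) → ℝ) (hA : HypA N η)
    (τ : ℕ) (hτ : τ + 1 < N) :
    Tendsto
      (fun t : ℝ => (1 - Kfix N η τ t τ) / (1 - t) ^ ((1 / 2 : ℝ) ^ (τ + 1)))
      (nhdsWithin 1 (Set.Ico (0 : ℝ) 1))
      (nhds (DConst N η τ)) := by
  simpa [LevelAsymp, Klevel, Dlevel, DConst] using (levelAsymp hA hτ 0 (Nat.zero_le _)).2

/-- `1 - K_{1i}(t) ∼ D_i (1-t)^{1/2^i}` as `t ↑ 1`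
(types 0-based: `τ = i - 1`, `K_{1i} = K_{0,τ} = Kfix N η τ t τ`). -/
theorem emigrant_generating_function_tail
    (N : ℕ) (hN : 2 ≤ N) (η : ℕ → (Fin N → ℕ) → ℝ) (hA : HypA N η)
    (τ : ℕ) (hτ : τ + 1 < N) :
    Tendsto
      (fun t : ℝ => (1 - Kfix N η τ t τ) / (1 - t) ^ ((1 / 2 : ℝ) ^ (τ + 1)))
      (nhdsWithin 1 (Set.Ico (0 : ℝ) 1))
      (nhds (DConst N η τ)) :=
  emigrant_generating_function_tail_general N η hA τ hτ

end BD
end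
end

section
/- Under Hypothesis A, let j ∈ {1,…,N−1} and λ_1,…,λ_N > 0, and set s_k(n) = exp(−λ_k n^{−γ_k}). Then for every sequence (m_n) of natural numbers with m_n / n^{γ_j} → 0, lim_{n→∞} n^{γ_j} · Q_{m_n}^{(j)}(s(n)) = λ_j. -/
open Filter Topology

noncomputable section

namespace BD

/-! Write `Q_r^{(j)}` for `Q_r^{(j)}(s(n))`. Since `η_{jj}` has mean one and a type-`j` particle
only has children of types `≥ j`, second-order Taylor bounds on `h_j` give
`Q_r^{(j)} - E[η_{jj}²] (Q_r^{(j)})² / 2 ≤ Q_{r+1}^{(j)} ≤ Q_r^{(j)} + ∑_{l > j} m_{jl} Q_r^{(l)}`.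
If every `Q_r^{(l)}`, `l > j`, is `O(n^{-γ_l}) = O(n^{-2γ_j})` (as `γ_{j+1} = 2γ_j`), then over
the first `m_n = o(n^{γ_j})` generations `Q^{(j)}` moves away from
`Q_0^{(j)} = 1 - s_j(n) = λ_j n^{-γ_j} + O(n^{-2γ_j})` by at most
`m_n · O(n^{-2γ_j}) = o(n^{-γ_j})`. This also shows `Q_r^{(j)} = O(n^{-γ_j})` for `r ≤ m_n`,
which feeds a downward induction over the types. -/

open Finset

theorem one_sub_prod_le_sum_one_sub {ι : Type*} (s : Finset ι) {f : ι → ℝ}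
    (h0 : ∀ i ∈ s, 0 ≤ f i) (h1 : ∀ i ∈ s, f i ≤ 1) :
    1 - ∏ i ∈ s, f i ≤ ∑ i ∈ s, (1 - f i) := by
  classical
  induction s using Finset.induction_on with
  | empty => simp
  | insert a s ha ih =>
    simp only [mem_insert, forall_eq_or_imp] at h0 h1
    rw [prod_insert ha, sum_insert ha]
    have hs := ih h0.2 h1.2
    have hprod : ∏ i ∈ s, f i ≤ 1 := prod_le_one h0.2 h1.2
    nlinarith [h0.1, h1.1]

theorem one_sub_pow_le_mul_one_sub {x : ℝ} (hx : 0 ≤ x) (k : ℕ) : 1 - x ^ k ≤ k * (1 - x) := by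
  have := one_add_mul_le_pow (a := x - 1) (by linarith) k
  rw [add_sub_cancel] at this
  linarith

theorem mul_sub_sq_div_two_le_one_sub_pow {y : ℝ} (hy0 : 0 ≤ y) (hy1 : y ≤ 1) (k : ℕ) :
    k * y - (k * y) ^ 2 / 2 ≤ 1 - (1 - y) ^ k := by
  induction k with
  | zero => simp
  | succ k ih =>
    have step := mul_le_mul_of_nonneg_left ih (sub_nonneg.2 hy1)
    rw [pow_succ (1 - y)]
    push_cast
    nlinarith [sq_nonneg y, mul_nonneg (sq_nonneg ((k : ℝ) * y)) hy0]

theorem sub_sq_le_one_sub_exp_neg {x : ℝ} (hx : 0 ≤ x) : x - x ^ 2 ≤ 1 - Real.exp (-x) := by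
  rcases le_or_gt x 1 with h | h
  · have := Real.abs_exp_sub_one_sub_id_le (x := -x) (by rwa [abs_neg, abs_of_nonneg hx])
    rw [abs_le, neg_sq] at this
    linarith [this.2]
  · nlinarith [Real.exp_le_one_iff.2 (show -x ≤ 0 by linarith)]

theorem le_add_mul_of_forall_succ_le {a : ℕ → ℝ} {D : ℝ} {r : ℕ}
    (h : ∀ p < r, a (p + 1) ≤ a p + D) : a r ≤ a 0 + r * D := by
  induction r with
  | zero => simp
  | succ r ih =>
    have hr := h r r.lt_succ_self
    have := ih fun p hp => h p (hp.trans r.lt_succ_self)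
    push_cast
    linarith

theorem tendsto_div_rpow_of_le {f : ℕ → ℝ} (hf : ∀ n, 0 ≤ f n) {a b : ℝ} (hab : a ≤ b)
    (h : Tendsto (fun n : ℕ => f n / (n : ℝ) ^ a) atTop (𝓝 0)) :
    Tendsto (fun n : ℕ => f n / (n : ℝ) ^ b) atTop (𝓝 0) := by
  refine tendsto_of_tendsto_of_tendsto_of_le_of_le' tendsto_const_nhds h
    (Eventually.of_forall fun n => ?_) ?_
  · exact div_nonneg (hf n) (Real.rpow_nonneg (Nat.cast_nonneg n) b)
  filter_upwards [eventually_ge_atTop 1] with n hn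
  have hn : (1 : ℝ) ≤ n := by exact_mod_cast hn
  exact div_le_div_of_nonneg_left (hf n) (by positivity) (Real.rpow_le_rpow_of_exponent_le hn hab)

section Pgf

variable {ι : Type*} [Fintype ι] {p : (ι → ℕ) → ℝ} {s : ι → ℝ}

theorem prod_pow_mem_Icc (hs : s ∈ Set.Icc 0 1) (k : ι → ℕ) :
    ∏ j, s j ^ k j ∈ Set.Icc (0 : ℝ) 1 :=
  ⟨prod_nonneg fun j _ => pow_nonneg (hs.1 j) _,
    prod_le_one (fun j _ => pow_nonneg (hs.1 j) _) fun j _ => pow_le_one₀ (hs.1 j) (hs.2 j)⟩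

theorem summable_mul_prod_pow (hp0 : ∀ k, 0 ≤ p k) (hp : Summable p) (hs : s ∈ Set.Icc 0 1) :
    Summable fun k => p k * ∏ j, s j ^ k j :=
  hp.of_nonneg_of_le (fun k => mul_nonneg (hp0 k) (prod_pow_mem_Icc hs k).1)
    fun k => mul_le_of_le_one_right (hp0 k) (prod_pow_mem_Icc hs k).2

theorem tsum_mul_prod_pow_mem_Icc (hp0 : ∀ k, 0 ≤ p k) (hp : HasSum p 1)
    (hs : s ∈ Set.Icc 0 1) : ∑' k, p k * ∏ j, s j ^ k j ∈ Set.Icc (0 : ℝ) 1 :=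
  ⟨tsum_nonneg fun k => mul_nonneg (hp0 k) (prod_pow_mem_Icc hs k).1,
    hasSum_le (fun k => mul_le_of_le_one_right (hp0 k) (prod_pow_mem_Icc hs k).2)
      (summable_mul_prod_pow hp0 hp.summable hs).hasSum hp⟩

theorem hasSum_mul_one_sub_prod_pow (hp0 : ∀ k, 0 ≤ p k) (hp : HasSum p 1)
    (hs : s ∈ Set.Icc 0 1) :
    HasSum (fun k => p k * (1 - ∏ j, s j ^ k j)) (1 - ∑' k, p k * ∏ j, s j ^ k j) := by
  simpa only [mul_sub, mul_one] using hp.sub (summable_mul_prod_pow hp0 hp.summable hs).hasSum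

theorem one_sub_tsum_mul_prod_pow_le (hp0 : ∀ k, 0 ≤ p k) (hp : HasSum p 1)
    (hmean : ∀ j, Summable fun k => p k * k j) (hs : s ∈ Set.Icc 0 1) :
    1 - ∑' k, p k * ∏ j, s j ^ k j ≤ ∑ j, (∑' k, p k * k j) * (1 - s j) := by
  refine hasSum_le (fun k => ?_) (hasSum_mul_one_sub_prod_pow hp0 hp hs)
    (hasSum_sum fun j _ => (hmean j).hasSum.mul_right (1 - s j))
  have hunion : 1 - ∏ j, s j ^ k j ≤ ∑ j, k j * (1 - s j) :=
    (one_sub_prod_le_sum_one_sub _ (fun j _ => (pow_nonneg (hs.1 j) _))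
      fun j _ => pow_le_one₀ (hs.1 j) (hs.2 j)).trans
      (sum_le_sum fun j _ => one_sub_pow_le_mul_one_sub (hs.1 j) (k j))
  calc p k * (1 - ∏ j, s j ^ k j) ≤ p k * ∑ j, k j * (1 - s j) :=
        mul_le_mul_of_nonneg_left hunion (hp0 k)
    _ = ∑ j, p k * k j * (1 - s j) := by simp only [mul_sum, mul_assoc]

theorem le_one_sub_tsum_mul_prod_pow (hp0 : ∀ k, 0 ≤ p k) (hp : HasSum p 1)
    (hs : s ∈ Set.Icc 0 1) (i : ι) (hmean : HasSum (fun k => p k * k i) 1)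
    (hsq : Summable fun k => p k * (k i : ℝ) ^ 2) :
    (1 - s i) - (∑' k, p k * (k i : ℝ) ^ 2) / 2 * (1 - s i) ^ 2 ≤
      1 - ∑' k, p k * ∏ j, s j ^ k j := by
  classical
  have hs1 : ∀ j, s j ≤ 1 := hs.2
  have hlow := (hmean.mul_right (1 - s i)).sub (hsq.hasSum.mul_right ((1 - s i) ^ 2 / 2))
  refine (by ring : _ = _).trans_le
    (hasSum_le (fun k => ?_) hlow (hasSum_mul_one_sub_prod_pow hp0 hp hs))
  have hprod : ∏ j, s j ^ k j ≤ s i ^ k i := by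
    rw [← mul_prod_erase univ _ (mem_univ i)]
    exact mul_le_of_le_one_right (pow_nonneg (hs.1 i) _)
      (prod_le_one (fun j _ => pow_nonneg (hs.1 j) _) fun j _ => pow_le_one₀ (hs.1 j) (hs1 j))
  have htaylor := mul_sub_sq_div_two_le_one_sub_pow (sub_nonneg.2 (hs1 i))
    (sub_le_self _ (hs.1 i)) (k i)
  rw [sub_sub_cancel] at htaylor
  calc p k * k i * (1 - s i) - p k * (k i : ℝ) ^ 2 * ((1 - s i) ^ 2 / 2)
      = p k * (k i * (1 - s i) - (k i * (1 - s i)) ^ 2 / 2) := by ring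
    _ ≤ p k * (1 - ∏ j, s j ^ k j) := mul_le_mul_of_nonneg_left (by linarith) (hp0 k)

end Pgf

@[simp]
theorem coord_fin {N : ℕ} (k : Fin N → ℕ) (j : Fin N) : coord k j = k j := dif_pos j.2

theorem meanM_fin {N : ℕ} (η : ℕ → (Fin N → ℕ) → ℝ) (i j : Fin N) :
    meanM N η i j = ∑' k, η i k * (k j : ℝ) := by
  simp [meanM]

def secondMoment (N : ℕ) (η : ℕ → (Fin N → ℕ) → ℝ) (i : Fin N) : ℝ :=
  ∑' k : Fin N → ℕ, η i k * (k i : ℝ) ^ 2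

namespace HypA

variable {N : ℕ} {η : ℕ → (Fin N → ℕ) → ℝ} (hA : HypA N η)
include hA

theorem hasSum_mul_self (i : Fin N) : HasSum (fun k => η i k * (k i : ℝ)) 1 := by
  simpa using hA.critical i i.2

theorem summable_mul (i j : Fin N) : Summable fun k => η i k * (k j : ℝ) := by
  simpa using hA.firstMom i i.2 j

theorem summable_mul_sq (i : Fin N) : Summable fun k => η i k * (k i : ℝ) ^ 2 := by
  simpa [sq] using hA.secondMom i i.2 i i

theorem secondMoment_nonneg (i : Fin N) : 0 ≤ secondMoment N η i :=
  tsum_nonneg fun k => mul_nonneg (hA.nonneg i i.2 k) (sq_nonneg _)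

theorem meanM_nonneg (i j : Fin N) : 0 ≤ meanM N η i j := by
  rw [meanM_fin]
  exact tsum_nonneg fun k => mul_nonneg (hA.nonneg i i.2 k) (Nat.cast_nonneg _)

theorem meanM_self (i : Fin N) : meanM N η i i = 1 := by
  rw [meanM_fin]
  exact (hA.hasSum_mul_self i).tsum_eq

theorem meanM_eq_zero_of_lt {i j : Fin N} (h : j < i) : meanM N η i j = 0 := by
  rw [meanM_fin]
  refine (tsum_congr fun k => ?_).trans tsum_zero
  by_cases hk : η i k = 0
  · rw [hk, zero_mul]
  · rw [hA.decomp i i.2 k hk j h, Nat.cast_zero, mul_zero]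

end HypA

section Iterates

variable {N : ℕ} {η : ℕ → (Fin N → ℕ) → ℝ} (hA : HypA N η) {s : Fin N → ℝ}
  (hs : s ∈ Set.Icc 0 1)
include hA hs

theorem Hgen_mem_Icc : ∀ n, Hgen N η n s ∈ Set.Icc 0 1
  | 0 => hs
  | n + 1 =>
    ⟨fun i => (tsum_mul_prod_pow_mem_Icc (hA.nonneg i i.2) (hA.total i i.2)
        (Hgen_mem_Icc n)).1,
      fun i => (tsum_mul_prod_pow_mem_Icc (hA.nonneg i i.2) (hA.total i i.2)
        (Hgen_mem_Icc n)).2⟩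

theorem Qfun_nonneg (n : ℕ) (i : Fin N) : 0 ≤ Qfun N η n s i :=
  sub_nonneg.2 ((Hgen_mem_Icc hA hs n).2 i)

theorem Qfun_succ_le (n : ℕ) (i : Fin N) :
    Qfun N η (n + 1) s i ≤
      Qfun N η n s i + ∑ j ∈ Ioi i, meanM N η i j * Qfun N η n s j := by
  have h := one_sub_tsum_mul_prod_pow_le (hA.nonneg i i.2) (hA.total i i.2) (hA.summable_mul i)
    (Hgen_mem_Icc hA hs n)
  simp only [← meanM_fin] at h
  calc Qfun N η (n + 1) s i ≤ ∑ j : Fin N, meanM N η i j * Qfun N η n s j := h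
    _ = ∑ j ∈ Ici i, meanM N η i j * Qfun N η n s j := by
      refine (sum_subset (subset_univ _) fun j _ hj => ?_).symm
      rw [hA.meanM_eq_zero_of_lt (not_le.1 (by simpa using hj)), zero_mul]
    _ = _ := by rw [← add_sum_Ioi_eq_sum_Ici, hA.meanM_self, one_mul]

theorem Qfun_succ_ge (n : ℕ) (i : Fin N) :
    Qfun N η n s i - secondMoment N η i / 2 * Qfun N η n s i ^ 2 ≤ Qfun N η (n + 1) s i :=
  le_one_sub_tsum_mul_prod_pow (hA.nonneg i i.2) (hA.total i i.2) (Hgen_mem_Icc hA hs n) i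
    (hA.hasSum_mul_self i) (hA.summable_mul_sq i)

theorem Qfun_le_add (i : Fin N) {D : ℝ} {r : ℕ}
    (hD : ∀ p < r, ∑ j ∈ Ioi i, meanM N η i j * Qfun N η p s j ≤ D) :
    Qfun N η r s i ≤ Qfun N η 0 s i + r * D :=
  le_add_mul_of_forall_succ_le (a := fun p => Qfun N η p s i) fun p hp =>
    (Qfun_succ_le hA hs p i).trans (add_le_add_right (hD p hp) _)

theorem Qfun_ge_sub (i : Fin N) {C : ℝ} {r : ℕ} (hC : ∀ p < r, Qfun N η p s i ≤ C) :
    Qfun N η 0 s i - r * (secondMoment N η i / 2 * C ^ 2) ≤ Qfun N η r s i := by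
  have h := le_add_mul_of_forall_succ_le (a := fun p => -Qfun N η p s i) (r := r)
    (D := secondMoment N η i / 2 * C ^ 2) fun p hp => by
      have hsq : Qfun N η p s i ^ 2 ≤ C ^ 2 := pow_le_pow_left₀ (Qfun_nonneg hA hs p i) (hC p hp) 2
      have := mul_le_mul_of_nonneg_left hsq (div_nonneg (hA.secondMoment_nonneg i) two_pos.le)
      linarith [Qfun_succ_ge hA hs p i]
  linarith

end Iterates

theorem gam_pos (N t : ℕ) : 0 < gam N t := by
  unfold gam
  positivity

theorem gam_le_gam (N : ℕ) {t l : ℕ} (h : t ≤ l) : gam N t ≤ gam N l :=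
  pow_le_pow_of_le_one (by norm_num) (by norm_num) (by omega)

theorem gam_succ {N t : ℕ} (h : t + 1 < N) : gam N (t + 1) = 2 * gam N t := by
  rw [gam, gam, show N - 1 - t = N - 1 - (t + 1) + 1 by omega, pow_succ]
  ring

theorem rpow_neg_gam_le_sq {N n : ℕ} (hn : 1 ≤ n) {j l : ℕ} (hjl : j < l) (hl : l < N) :
    (n : ℝ) ^ (-gam N l) ≤ ((n : ℝ) ^ (-gam N j)) ^ 2 := by
  rw [← Real.rpow_natCast, ← Real.rpow_mul (Nat.cast_nonneg n)]
  refine Real.rpow_le_rpow_of_exponent_le (by exact_mod_cast hn) ?_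
  have := gam_le_gam N (show j + 1 ≤ l from hjl)
  rw [gam_succ (by omega)] at this
  push_cast
  linarith

section Sample

variable {N : ℕ} {lam : Fin N → ℝ}

theorem sVec_mem_Icc (hlam : ∀ k, 0 ≤ lam k) (n : ℕ) : sVec N lam n ∈ Set.Icc 0 1 :=
  ⟨fun _ => (Real.exp_pos _).le, fun k => Real.exp_le_one_iff.2 <|
    mul_nonpos_of_nonpos_of_nonneg (neg_nonpos.2 (hlam k)) (Real.rpow_nonneg (Nat.cast_nonneg n) _)⟩

theorem Qfun_zero_sVec (η : ℕ → (Fin N → ℕ) → ℝ) (n : ℕ) (k : Fin N) :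
    Qfun N η 0 (sVec N lam n) k = 1 - Real.exp (-(lam k * (n : ℝ) ^ (-gam N k))) := by
  simp [Qfun, Hgen, sVec]

theorem Qfun_zero_sVec_le (η : ℕ → (Fin N → ℕ) → ℝ) (n : ℕ) (k : Fin N) :
    Qfun N η 0 (sVec N lam n) k ≤ lam k * (n : ℝ) ^ (-gam N k) := by
  rw [Qfun_zero_sVec]
  linarith [Real.one_sub_le_exp_neg (lam k * (n : ℝ) ^ (-gam N k))]

theorem sub_sq_le_Qfun_zero_sVec (η : ℕ → (Fin N → ℕ) → ℝ) (n : ℕ) {k : Fin N}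
    (hlam : 0 ≤ lam k) :
    lam k * (n : ℝ) ^ (-gam N k) - (lam k * (n : ℝ) ^ (-gam N k)) ^ 2 ≤
      Qfun N η 0 (sVec N lam n) k := by
  rw [Qfun_zero_sVec]
  exact sub_sq_le_one_sub_exp_neg (mul_nonneg hlam (Real.rpow_nonneg (Nat.cast_nonneg n) _))

end Sample

section Bounds

variable {N : ℕ} {η : ℕ → (Fin N → ℕ) → ℝ} (hA : HypA N η) {lam : Fin N → ℝ}
  (hlam : ∀ k, 0 ≤ lam k) {m : ℕ → ℕ}
include hA hlam

theorem exists_eventually_Qfun_sVec_le_add (j : Fin N)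
    (h : ∀ l ∈ Ioi j, ∀ᶠ C in atTop, ∀ᶠ n in atTop, ∀ r ≤ m n,
      Qfun N η r (sVec N lam n) l ≤ C * (n : ℝ) ^ (-gam N l)) :
    ∃ A, 0 ≤ A ∧ ∀ᶠ n in atTop, ∀ r ≤ m n, Qfun N η r (sVec N lam n) j ≤
      Qfun N η 0 (sVec N lam n) j + r * (A * ((n : ℝ) ^ (-gam N j)) ^ 2) := by
  obtain ⟨C, hC0, hC⟩ := ((eventually_ge_atTop 0).and ((eventually_all_finset _).2 h)).exists
  refine ⟨(∑ l ∈ Ioi j, meanM N η j l) * C,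
    mul_nonneg (sum_nonneg fun l _ => hA.meanM_nonneg j l) hC0, ?_⟩
  filter_upwards [(eventually_all_finset _).2 hC, eventually_ge_atTop 1] with n hn hn1 r hr
  refine Qfun_le_add hA (sVec_mem_Icc hlam n) j fun p hp => ?_
  rw [sum_mul, sum_mul]
  refine sum_le_sum fun l hl => ?_
  rw [mul_assoc]
  refine mul_le_mul_of_nonneg_left ((hn l hl p (hp.le.trans hr)).trans ?_) (hA.meanM_nonneg j l)
  exact mul_le_mul_of_nonneg_left (rpow_neg_gam_le_sq hn1 (Fin.lt_def.1 (mem_Ioi.1 hl)) l.2) hC0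

theorem eventually_Qfun_sVec_le {t : ℕ}
    (hm : Tendsto (fun n : ℕ => (m n : ℝ) / (n : ℝ) ^ gam N t) atTop (𝓝 0)) (j : Fin N)
    (htj : t ≤ j) : ∀ᶠ C in atTop, ∀ᶠ n in atTop, ∀ r ≤ m n,
      Qfun N η r (sVec N lam n) j ≤ C * (n : ℝ) ^ (-gam N j) := by
  induction j using WellFoundedGT.induction with
  | _ j ih =>
    obtain ⟨A, hA0, hdrift⟩ := exists_eventually_Qfun_sVec_le_add hA hlam j fun l hl =>
      ih l (mem_Ioi.1 hl) (htj.trans (mem_Ioi.1 hl).le)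
    have hmj := (tendsto_div_rpow_of_le (fun n => Nat.cast_nonneg (m n)) (gam_le_gam N htj)
      hm).const_mul A
    rw [mul_zero] at hmj
    filter_upwards [eventually_ge_atTop (lam j + 1)] with C hC
    filter_upwards [hdrift, hmj.eventually (ge_mem_nhds one_pos), eventually_ge_atTop 1]
      with n hn hmn hn1 r hr
    have hu : 0 < (n : ℝ) ^ gam N j := Real.rpow_pos_of_pos (by exact_mod_cast hn1) _
    have hQ0le := Qfun_zero_sVec_le (lam := lam) η n j
    rw [Real.rpow_neg (Nat.cast_nonneg n)] at hn hQ0le ⊢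
    have hr' : (r : ℝ) ≤ m n := by exact_mod_cast hr
    calc Qfun N η r (sVec N lam n) j
        ≤ lam j * ((n : ℝ) ^ gam N j)⁻¹ + m n * (A * (((n : ℝ) ^ gam N j)⁻¹) ^ 2) :=
          (hn r hr).trans (add_le_add hQ0le (mul_le_mul_of_nonneg_right hr' (by positivity)))
      _ = (lam j + A * (m n / (n : ℝ) ^ gam N j)) * ((n : ℝ) ^ gam N j)⁻¹ := by ring
      _ ≤ C * ((n : ℝ) ^ gam N j)⁻¹ :=
          mul_le_mul_of_nonneg_right (by linarith) (inv_nonneg.2 hu.le)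

theorem eventually_le_rpow_mul_Qfun_sVec (j : Fin N) {C : ℝ}
    (h : ∀ᶠ n in atTop, ∀ r ≤ m n, Qfun N η r (sVec N lam n) j ≤ C * (n : ℝ) ^ (-gam N j)) :
    ∀ᶠ n : ℕ in atTop, lam j - lam j ^ 2 * (n : ℝ) ^ (-gam N j) -
        secondMoment N η j / 2 * C ^ 2 * (m n / (n : ℝ) ^ gam N j) ≤
      (n : ℝ) ^ gam N j * Qfun N η (m n) (sVec N lam n) j := by
  filter_upwards [h, eventually_ge_atTop 1] with n hn hn1
  have hu : 0 < (n : ℝ) ^ gam N j := Real.rpow_pos_of_pos (by exact_mod_cast hn1) _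
  have hQ := Qfun_ge_sub hA (sVec_mem_Icc hlam n) j fun p hp => hn p hp.le
  have hQ0 := sub_sq_le_Qfun_zero_sVec η n (hlam j)
  rw [Real.rpow_neg (Nat.cast_nonneg n)] at hQ hQ0 ⊢
  calc lam j - lam j ^ 2 * ((n : ℝ) ^ gam N j)⁻¹ -
        secondMoment N η j / 2 * C ^ 2 * (m n / (n : ℝ) ^ gam N j)
      = (n : ℝ) ^ gam N j * (lam j * ((n : ℝ) ^ gam N j)⁻¹ -
          (lam j * ((n : ℝ) ^ gam N j)⁻¹) ^ 2 -
          m n * (secondMoment N η j / 2 * (C * ((n : ℝ) ^ gam N j)⁻¹) ^ 2)) := by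
        field_simp
    _ ≤ (n : ℝ) ^ gam N j * Qfun N η (m n) (sVec N lam n) j :=
        mul_le_mul_of_nonneg_left (by linarith) hu.le

end Bounds

theorem eventually_rpow_mul_Qfun_sVec_le {N : ℕ} {η : ℕ → (Fin N → ℕ) → ℝ} {lam : Fin N → ℝ}
    {m : ℕ → ℕ} (j : Fin N) {A : ℝ}
    (h : ∀ᶠ n in atTop, ∀ r ≤ m n, Qfun N η r (sVec N lam n) j ≤
      Qfun N η 0 (sVec N lam n) j + r * (A * ((n : ℝ) ^ (-gam N j)) ^ 2)) :
    ∀ᶠ n : ℕ in atTop, (n : ℝ) ^ gam N j * Qfun N η (m n) (sVec N lam n) j ≤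
      lam j + A * (m n / (n : ℝ) ^ gam N j) := by
  filter_upwards [h, eventually_ge_atTop 1] with n hn hn1
  have hu : 0 < (n : ℝ) ^ gam N j := Real.rpow_pos_of_pos (by exact_mod_cast hn1) _
  have hQ0 := Qfun_zero_sVec_le (lam := lam) η n j
  rw [Real.rpow_neg (Nat.cast_nonneg n)] at hn hQ0
  calc (n : ℝ) ^ gam N j * Qfun N η (m n) (sVec N lam n) j
      ≤ (n : ℝ) ^ gam N j *
          (lam j * ((n : ℝ) ^ gam N j)⁻¹ + m n * (A * (((n : ℝ) ^ gam N j)⁻¹) ^ 2)) :=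
        mul_le_mul_of_nonneg_left (by linarith [hn (m n) le_rfl]) hu.le
    _ = lam j + A * (m n / (n : ℝ) ^ gam N j) := by field_simp

/-- `lim n^{γ_j} Q_{m_n}^{(j)}(s(n)) = λ_j` when `m_n ≪ n^{γ_j}`
(types 0-based: `t = j - 1`, `j ∈ {1,…,N-1}`). -/
theorem Q_limit_early
    (N : ℕ) (η : ℕ → (Fin N → ℕ) → ℝ) (hA : HypA N η)
    (t : ℕ) (ht : t + 1 < N)
    (lam : Fin N → ℝ) (hlam : ∀ k, 0 < lam k)
    (m : ℕ → ℕ)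
    (hm : Tendsto (fun n : ℕ => (m n : ℝ) / (n : ℝ) ^ gam N t) atTop (nhds 0)) :
    Tendsto
      (fun n : ℕ => (n : ℝ) ^ gam N t * Qfun N η (m n) (sVec N lam n) ⟨t, by omega⟩)
      atTop (nhds (lam ⟨t, by omega⟩)) := by
  set j : Fin N := ⟨t, by omega⟩
  have hlam' : ∀ k, 0 ≤ lam k := fun k => (hlam k).le
  have hbound := eventually_Qfun_sVec_le hA hlam' hm
  obtain ⟨A, -, hdrift⟩ := exists_eventually_Qfun_sVec_le_add hA hlam' j fun l hl =>
    hbound l (mem_Ioi.1 hl).le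
  obtain ⟨C, hC⟩ := (hbound j le_rfl).exists
  have hnγ : Tendsto (fun n : ℕ => (n : ℝ) ^ (-gam N t)) atTop (𝓝 0) :=
    (tendsto_rpow_neg_atTop (gam_pos N t)).comp tendsto_natCast_atTop_atTop
  refine tendsto_of_tendsto_of_tendsto_of_le_of_le' ?_ ?_
    (eventually_le_rpow_mul_Qfun_sVec hA hlam' j hC)
    (eventually_rpow_mul_Qfun_sVec_le j hdrift)
  · simpa using ((hnγ.const_mul (lam j ^ 2)).const_sub (lam j)).sub
      (hm.const_mul (secondMoment N η j / 2 * C ^ 2))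
  · simpa using (hm.const_mul A).const_add (lam j)

end BD
end
end

section
/- Let b, m > 0 and define φ(λ₁, λ₂) = sqrt(mλ₂/b) · (bλ₁ + sqrt(bmλ₂) tanh(sqrt(bmλ₂))) / (bλ₁ tanh(sqrt(bmλ₂)) + sqrt(bmλ₂)) for λ₁ ≥ 0, λ₂ > 0. Then: (i) for all λ₁ ≥ 0 and λ₂ > 0, λ₁ ∂φ/∂λ₁ + 2λ₂ ∂φ/∂λ₂ = −b φ² + φ + m λ₂; (ii) for all y > 0, λ₁ ≥ 0, λ₂ > 0, the self-similarity identity φ(λ₁ y, λ₂ y²)/y = sqrt(mλ₂/b) · (bλ₁ + sqrt(bmλ₂) tanh(y sqrt(bmλ₂))) / (bλ₁ tanh(y sqrt(bmλ₂)) + sqrt(bmλ₂)) holds. -/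
/-!
Write `s = √(b m λ₂)`, so that `φ = s (b λ₁ + s tanh s) / (b (b λ₁ tanh s + s))` and `s² / b = m λ₂`.
Since `∂s/∂λ₂ = s / (2 λ₂)`, the operator `2 λ₂ ∂/∂λ₂` becomes `s ∂/∂s`, and the PDE reduces to the
identity `λ₁ ∂φ/∂λ₁ + s ∂φ/∂s = -b φ² + φ + s² / b`, a rational identity in `λ₁`, `s` and `tanh s`
once `tanh' = 1 - tanh²` is used. Scaling `(λ₁, λ₂) ↦ (λ₁ y, λ₂ y²)` scales `s` by `y`, which gives
the self-similarity.
-/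

noncomputable section

/-- The scaling-limit function `φ(λ₁, λ₂)` for a two-type critical decomposable
branching process with variance parameter `b` and mean migration parameter `m`. -/
def phiBM (b m l1 l2 : ℝ) : ℝ :=
  Real.sqrt (m * l2 / b) *
      (b * l1 + Real.sqrt (b * m * l2) * Real.tanh (Real.sqrt (b * m * l2))) /
    (b * l1 * Real.tanh (Real.sqrt (b * m * l2)) + Real.sqrt (b * m * l2))

open Real

namespace Real

theorem hasDerivAt_tanh (x : ℝ) : HasDerivAt tanh (1 - tanh x ^ 2) x := by
  have h := (hasDerivAt_sinh x).div (hasDerivAt_cosh x) (cosh_pos x).ne'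
  rw [← show tanh = sinh / cosh from funext tanh_eq_sinh_div_cosh] at h
  refine h.congr_deriv ?_
  rw [tanh_eq_sinh_div_cosh]
  field_simp

theorem tanh_nonneg {x : ℝ} (hx : 0 ≤ x) : 0 ≤ tanh x := by
  rw [tanh_eq_sinh_div_cosh]
  exact div_nonneg (sinh_nonneg_iff.2 hx) (cosh_pos x).le

theorem sqrt_div_eq_sqrt_mul_div {b : ℝ} (hb : 0 < b) (x : ℝ) : √(x / b) = √(b * x) / b := by
  have hs : 0 < √b := sqrt_pos.2 hb
  rw [sqrt_div' x hb.le, sqrt_mul hb.le]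
  field_simp
  rw [sq_sqrt hb.le]

end Real

theorem two_mul_mul_deriv_comp_sqrt_mul {f : ℝ → ℝ} {c v : ℝ} (hcv : 0 < c * v)
    (hf : DifferentiableAt ℝ f √(c * v)) :
    2 * v * deriv (fun w => f √(c * w)) v = √(c * v) * deriv f √(c * v) := by
  have hs : 0 < √(c * v) := sqrt_pos.2 hcv
  have hsqrt : HasDerivAt (fun w => √(c * w)) (1 / (2 * √(c * v)) * c) v :=
    (hasDerivAt_sqrt hcv.ne').comp v (by simpa using (hasDerivAt_id v).const_mul c)
  have hcomp : HasDerivAt (fun w => f √(c * w)) _ v := hf.hasDerivAt.comp v hsqrt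
  have hdiv : c * v / √(c * v) = √(c * v) := by
    rw [div_eq_iff hs.ne', ← sq, sq_sqrt hcv.le]
  calc 2 * v * deriv (fun w => f √(c * w)) v = deriv f √(c * v) * (c * v / √(c * v)) := by
        rw [hcomp.deriv]; ring
    _ = √(c * v) * deriv f √(c * v) := by rw [hdiv, mul_comm]

/-- `phiBM b m l1 l2` as a function of `l1` and `s = √(b m l2)`. -/
def phiProfile (b l1 s : ℝ) : ℝ :=
  s * (b * l1 + s * tanh s) / (b * (b * l1 * tanh s + s))

theorem phiBM_eq_phiProfile {b : ℝ} (hb : 0 < b) (m l1 l2 : ℝ) :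
    phiBM b m l1 l2 = phiProfile b l1 √(b * m * l2) := by
  rw [phiBM, phiProfile, sqrt_div_eq_sqrt_mul_div hb, ← mul_assoc b m, div_mul_eq_mul_div, div_div]

section phiProfile

variable {b l1 s : ℝ}

theorem hasDerivAt_phiProfile_fst (hb : b ≠ 0) (hD : b * l1 * tanh s + s ≠ 0) :
    HasDerivAt (fun u => phiProfile b u s)
      (s ^ 2 * (1 - tanh s ^ 2) / (b * l1 * tanh s + s) ^ 2) l1 := by
  have hN : HasDerivAt (fun u => s * (b * u + s * tanh s)) (s * b) l1 := by
    simpa using (((hasDerivAt_id l1).const_mul b).add_const (s * tanh s)).const_mul s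
  have hD' : HasDerivAt (fun u => b * (b * u * tanh s + s)) (b * (b * tanh s)) l1 := by
    simpa using ((((hasDerivAt_id l1).const_mul b).mul_const (tanh s)).add_const s).const_mul b
  refine (hN.div hD' (mul_ne_zero hb hD)).congr_deriv ?_
  field_simp
  ring

theorem hasDerivAt_phiProfile_snd (hb : b ≠ 0) (hD : b * l1 * tanh s + s ≠ 0) :
    HasDerivAt (fun r => phiProfile b l1 r)
      (((b * l1 + s * tanh s) * (b * l1 * tanh s + s) +
          s * (1 - tanh s ^ 2) * (s ^ 2 - b * l1 - b ^ 2 * l1 ^ 2)) /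
        (b * (b * l1 * tanh s + s) ^ 2)) s := by
  have hT := hasDerivAt_tanh s
  have hN : HasDerivAt (fun r => r * (b * l1 + r * tanh r)) _ s :=
    (hasDerivAt_id' s).mul (((hasDerivAt_id' s).mul hT).const_add (b * l1))
  have hD' : HasDerivAt (fun r => b * (b * l1 * tanh r + r)) _ s :=
    ((hT.const_mul (b * l1)).add (hasDerivAt_id' s)).const_mul b
  refine (hN.div hD' (mul_ne_zero hb hD)).congr_deriv ?_
  field_simp
  ring

theorem phiProfile_euler (hb : b ≠ 0) (hD : b * l1 * tanh s + s ≠ 0) :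
    l1 * deriv (fun u => phiProfile b u s) l1 + s * deriv (fun r => phiProfile b l1 r) s =
      -b * phiProfile b l1 s ^ 2 + phiProfile b l1 s + s ^ 2 / b := by
  rw [(hasDerivAt_phiProfile_fst hb hD).deriv, (hasDerivAt_phiProfile_snd hb hD).deriv,
    phiProfile]
  -- `field_simp` cancels the denominator only once it is an atom.
  generalize tanh s = t at hD ⊢
  generalize hE : b * l1 * t + s = D at hD ⊢
  obtain rfl := eq_sub_of_add_eq' hE
  field_simp
  ring

theorem phiProfile_denom_pos (hb : 0 < b) (hl1 : 0 ≤ l1) (hs : 0 < s) :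
    0 < b * l1 * tanh s + s := by
  have := mul_nonneg (mul_nonneg hb.le hl1) (tanh_nonneg hs.le)
  linarith

theorem phiProfile_mul_mul (y : ℝ) (hy : y ≠ 0) :
    phiProfile b (l1 * y) (y * s) =
      y * (s * (b * l1 + s * tanh (y * s)) / (b * (b * l1 * tanh (y * s) + s))) := by
  rw [phiProfile, mul_div_assoc', ← mul_div_mul_left _ (b * (b * l1 * tanh (y * s) + s)) hy]
  ring

end phiProfile

/-- `φ` satisfies the PDE
`λ₁ ∂φ/∂λ₁ + 2λ₂ ∂φ/∂λ₂ = -bφ² + φ + mλ₂` on `{λ₁ ≥ 0, λ₂ > 0}`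
(one-sided in `λ₁` at `λ₁ = 0`) and the self-similarity identity. -/
theorem phi_pde_and_selfsimilarity (b m : ℝ) (hb : 0 < b) (hm : 0 < m) :
    (∀ l1 l2 : ℝ, 0 ≤ l1 → 0 < l2 →
      l1 * derivWithin (fun u : ℝ => phiBM b m u l2) (Set.Ici 0) l1 +
          2 * l2 * deriv (fun v : ℝ => phiBM b m l1 v) l2 =
        -b * phiBM b m l1 l2 ^ 2 + phiBM b m l1 l2 + m * l2) ∧
    (∀ y l1 l2 : ℝ, 0 < y → 0 ≤ l1 → 0 < l2 →
      phiBM b m (l1 * y) (l2 * y ^ 2) / y =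
        Real.sqrt (m * l2 / b) *
            (b * l1 + Real.sqrt (b * m * l2) * Real.tanh (y * Real.sqrt (b * m * l2))) /
          (b * l1 * Real.tanh (y * Real.sqrt (b * m * l2)) + Real.sqrt (b * m * l2))) := by
  have hphi : ∀ u v, phiBM b m u v = phiProfile b u √(b * m * v) := phiBM_eq_phiProfile hb m
  refine ⟨fun l1 l2 hl1 hl2 => ?_, fun y l1 l2 hy _ _ => ?_⟩
  · have hbm : 0 < b * m * l2 := by positivity
    have hD := phiProfile_denom_pos hb hl1 (sqrt_pos.2 hbm)
    have h₁ : derivWithin (fun u => phiBM b m u l2) (Set.Ici 0) l1 =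
        deriv (fun u => phiProfile b u √(b * m * l2)) l1 := by
      simp only [hphi]
      exact (hasDerivAt_phiProfile_fst hb.ne' hD.ne').differentiableAt.derivWithin
        (uniqueDiffOn_Ici 0 l1 hl1)
    have h₂ : 2 * l2 * deriv (fun v => phiBM b m l1 v) l2 =
        √(b * m * l2) * deriv (fun r => phiProfile b l1 r) √(b * m * l2) := by
      simp only [hphi]
      exact two_mul_mul_deriv_comp_sqrt_mul hbm
        (hasDerivAt_phiProfile_snd hb.ne' hD.ne').differentiableAt
    rw [h₁, h₂, phiProfile_euler hb.ne' hD.ne', hphi, sq_sqrt hbm.le, mul_assoc,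
      mul_div_cancel_left₀ _ hb.ne']
  · have hsqrt : √(b * m * (l2 * y ^ 2)) = y * √(b * m * l2) := by
      rw [← mul_assoc, sqrt_mul' _ (sq_nonneg y), sqrt_sq hy.le, mul_comm]
    rw [hphi, hsqrt, phiProfile_mul_mul y hy.ne', mul_div_cancel_left₀ _ hy.ne',
      sqrt_div_eq_sqrt_mul_div hb, ← mul_assoc b m, div_mul_eq_mul_div, div_div]

end
end
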